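/- arXiv:1001.1386 — 4 statements merged into one kernel-verified Lean document; each statement's English description precedes it below -/
import Mathlib

section
/- For all positive integers c, ℓ and every integer L with 1 ≤ L ≤ 2^ℓ the following holds. For every set S ⊆ 𝔽₂^ℓ with |S| = L, there exist a vector w ∈ 𝔽₂^ℓ, an integer d with d ≥ (1/c)·log₂(L/2) − (1 − 1/c)·log₂ ℓ, and vectors v₁, …, v_d ∈ S such that the sequence v₁ + w, v₂ + w, …, v_d + w is a c-increasing chain of length d. -/
/-!
Sauer–Shelah: if `|S|` exceeds `∑_{k<c} (ℓ choose k)`, the supports of `S` shatter some set `I`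
of `c` coordinates. Some class `F ⊆ S` of vectors agreeing on `I` has at least `|S| / 2^c`
elements, and shattering gives `y ∈ S` disagreeing on all of `I` with `F`. Recursing on `F`
yields a chain translated by some `w ∈ F`; all of its vectors vanish on `I` after translation,
while `y + w` is one on all of `I`, so `y` extends the chain. Each step loses a factor `2^c`, and
`∑_{k<c} (ℓ choose k) ≤ 2 ℓ^(c-1)` gives the bound on the length.
-/

/-- The support of a vector `v ∈ 𝔽₂^ℓ`: the set of coordinates where `v` is nonzero. -/
def suppF2 {ℓ : ℕ} (v : Fin ℓ → ZMod 2) : Finset (Fin ℓ) :=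
  Finset.univ.filter (fun i => v i ≠ 0)

/-- A sequence `v 0, …, v (d-1)` of vectors in `𝔽₂^ℓ` is a `c`-increasing chain if for
every `j`, `|supp(v j) \ (supp(v 0) ∪ ⋯ ∪ supp(v (j-1)))| ≥ c`. -/
def IncreasingChainF2 {ℓ : ℕ} (c : ℕ) {d : ℕ} (v : Fin d → (Fin ℓ → ZMod 2)) : Prop :=
  ∀ j : Fin d,
    c ≤ ((suppF2 (v j)) \ ((Finset.Iio j).biUnion (fun i => suppF2 (v i)))).card

open Finset

lemma ZMod.two_eq_of_ne_zero_iff {a b : ZMod 2} (h : a ≠ 0 ↔ b ≠ 0) : a = b := by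
  revert a b; decide

lemma Finset.sum_range_choose_le_two_pow (n c : ℕ) : ∑ k ∈ range c, n.choose k ≤ 2 ^ n :=
  calc ∑ k ∈ range c, n.choose k
      ≤ ∑ k ∈ range (n + 1), n.choose k :=
        sum_le_sum_of_ne_zero fun _ _ hk ↦
          mem_range.2 (Nat.lt_succ_of_le (not_lt.1 (mt Nat.choose_eq_zero_of_lt hk)))
    _ = 2 ^ n := Nat.sum_range_choose n

lemma Finset.sum_range_choose_le_two_mul_pow {n c : ℕ} (hn : 0 < n) (hc : 0 < c) :
    ∑ k ∈ range c, n.choose k ≤ 2 * n ^ (c - 1) := by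
  obtain rfl | hn2 : n = 1 ∨ 2 ≤ n := by omega
  · simpa using sum_range_choose_le_two_pow 1 c
  obtain ⟨c, rfl⟩ : ∃ c', c = c' + 1 := ⟨c - 1, by omega⟩
  calc ∑ k ∈ range (c + 1), n.choose k
      ≤ ∑ k ∈ range (c + 1), n ^ k := sum_le_sum fun k _ ↦ Nat.choose_le_pow n k
    _ = ∑ k ∈ range c, n ^ k + n ^ c := sum_range_succ _ _
    _ ≤ 2 * n ^ (c + 1 - 1) := by
        have := Nat.geomSum_lt hn2 (s := range c) fun k hk ↦ mem_range.1 hk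
        simp only [add_tsub_cancel_right]
        omega

lemma Finset.exists_shatters_card_eq {α : Type*} [Fintype α] [DecidableEq α]
    {𝒜 : Finset (Finset α)} {c : ℕ}
    (h : ∑ k ∈ range c, (Fintype.card α).choose k < #𝒜) : ∃ s, 𝒜.Shatters s ∧ #s = c := by
  have hc : c ≤ 𝒜.vcDim := by
    by_contra! hlt
    have : #𝒜 ≤ ∑ k ∈ range c, (Fintype.card α).choose k :=
      calc #𝒜 ≤ #𝒜.shatterer := card_le_card_shatterer 𝒜
        _ ≤ ∑ k ∈ Iic 𝒜.vcDim, (Fintype.card α).choose k := card_shatterer_le_sum_vcDim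
        _ ≤ _ := sum_le_sum_of_subset fun k hk ↦ mem_range.2 ((mem_Iic.1 hk).trans_lt hlt)
    omega
  have h𝒜 : 𝒜.Nonempty := card_pos.1 (by omega)
  obtain ⟨t, ht, htc⟩ := exists_mem_eq_sup _ ⟨∅, mem_shatterer.2 (shatters_empty.2 h𝒜)⟩ card
  obtain ⟨s, hst, hs⟩ := exists_subset_card_eq (hc.trans_eq htc)
  exact ⟨s, (mem_shatterer.1 ht).mono_right hst, hs⟩

lemma Finset.exists_eqOn_subset_card_le {α β : Type*} [Fintype β] [DecidableEq β]
    {S : Finset (α → β)} (hS : S.Nonempty) (I : Finset α) :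
    ∃ F ⊆ S, F.Nonempty ∧ #S ≤ Fintype.card β ^ #I * #F ∧
      ∀ x ∈ F, ∀ x' ∈ F, Set.EqOn x x' I := by
  classical
  let restrict : (α → β) → (I → β) := fun x m ↦ x m
  set t := S.image restrict
  have ht : (0 : ℚ) < #t := by exact_mod_cast card_pos.2 (hS.image restrict)
  have hcard : #t ≤ Fintype.card β ^ #I := by
    simpa [Fintype.card_fun, Fintype.card_coe] using card_le_univ t
  obtain ⟨q, -, hq⟩ := exists_le_card_fiber_of_nsmul_le_card_of_maps_to
    (fun x hx ↦ mem_image_of_mem restrict hx) (hS.image restrict)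
    (b := (#S : ℚ) / #t) (by rw [nsmul_eq_mul, mul_div_cancel₀ _ ht.ne'])
  have hSF : #S ≤ Fintype.card β ^ #I * #{x ∈ S | restrict x = q} := by
    rw [div_le_iff₀ ht, mul_comm] at hq
    calc #S ≤ #t * #{x ∈ S | restrict x = q} := by exact_mod_cast hq
      _ ≤ _ := Nat.mul_le_mul_right _ hcard
  refine ⟨_, filter_subset _ _, card_pos.1 ?_, hSF, fun x hx x' hx' m hm ↦ ?_⟩
  · by_contra! h0
    simp only [Nat.le_zero.1 h0, mul_zero, Nat.le_zero, card_eq_zero] at hSF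
    exact hS.ne_empty hSF
  · have := (mem_filter.1 hx).2.trans (mem_filter.1 hx').2.symm
    exact congrFun this ⟨m, hm⟩

section Chains

variable {ℓ : ℕ}

lemma mem_suppF2 {v : Fin ℓ → ZMod 2} {m : Fin ℓ} : m ∈ suppF2 v ↔ v m ≠ 0 := by
  simp [suppF2]

lemma mem_suppF2_add {v w : Fin ℓ → ZMod 2} {m : Fin ℓ} : m ∈ suppF2 (v + w) ↔ v m ≠ w m := by
  simp [mem_suppF2, add_eq_zero_iff_eq_neg, ZMod.neg_eq_self_mod_two]

lemma suppF2_injective : Function.Injective (suppF2 (ℓ := ℓ)) := fun _ _ h ↦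
  funext fun _ ↦ ZMod.two_eq_of_ne_zero_iff (by rw [← mem_suppF2, ← mem_suppF2, h])

lemma exists_card_eq_forall_exists_eqOn {c : ℕ} {S : Finset (Fin ℓ → ZMod 2)}
    (h : ∑ k ∈ range c, ℓ.choose k < #S) :
    ∃ I : Finset (Fin ℓ), #I = c ∧ ∀ p : Fin ℓ → ZMod 2, ∃ z ∈ S, Set.EqOn z p I := by
  obtain ⟨I, hI, hIc⟩ := exists_shatters_card_eq (𝒜 := S.image suppF2)
    (by rwa [card_image_of_injective _ suppF2_injective, Fintype.card_fin])
  refine ⟨I, hIc, fun p ↦ ?_⟩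
  obtain ⟨u, hu, hzI⟩ := hI (filter_subset (fun m ↦ p m ≠ 0) I)
  obtain ⟨z, hzS, rfl⟩ := mem_image.1 hu
  refine ⟨z, hzS, fun m hm ↦ ZMod.two_eq_of_ne_zero_iff ?_⟩
  have hzp : m ∈ I → (z m ≠ 0 ↔ p m ≠ 0) := by simpa [mem_suppF2] using congrArg (m ∈ ·) hzI
  exact hzp hm

lemma IncreasingChainF2.snoc {c d : ℕ} {f : Fin d → Fin ℓ → ZMod 2} {g : Fin ℓ → ZMod 2}
    (hf : IncreasingChainF2 c f) {I : Finset (Fin ℓ)} (hI : c ≤ #I) (hIg : I ⊆ suppF2 g)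
    (hIf : ∀ i, Disjoint I (suppF2 (f i))) :
    IncreasingChainF2 c (Fin.snoc f g : Fin (d + 1) → Fin ℓ → ZMod 2) := by
  intro j
  induction j using Fin.lastCases with
  | last =>
    refine hI.trans (card_le_card fun m hm ↦ ?_)
    simp only [Fin.snoc_last, mem_sdiff, mem_biUnion, mem_Iio, not_exists, not_and]
    refine ⟨hIg hm, fun i hi ↦ ?_⟩
    induction i using Fin.lastCases with
    | last => exact absurd hi (lt_irrefl _)
    | cast i => simpa using disjoint_left.1 (hIf i) hm
  | cast j =>
    rw [Fin.snoc_castSucc, ← Fin.map_castSuccEmb_Iio, map_eq_image, image_biUnion]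
    simpa using hf j

theorem exists_increasingChainF2_add_of_nonempty {c : ℕ} (hc : 0 < c)
    {S : Finset (Fin ℓ → ZMod 2)} (hS : S.Nonempty) :
    ∃ w ∈ S, ∃ (d : ℕ) (v : Fin d → Fin ℓ → ZMod 2), (∀ j, v j ∈ S) ∧
      IncreasingChainF2 c (fun j ↦ v j + w) ∧
      #S ≤ 2 ^ (c * d) * ∑ k ∈ range c, ℓ.choose k := by
  induction S using Finset.strongInduction with
  | H S ih =>
  by_cases hsmall : #S ≤ ∑ k ∈ range c, ℓ.choose k
  · obtain ⟨w, hw⟩ := hS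
    exact ⟨w, hw, 0, Fin.elim0, (·.elim0), (·.elim0), by simpa using hsmall⟩
  obtain ⟨I, hIc, hI⟩ := exists_card_eq_forall_exists_eqOn (not_le.1 hsmall)
  obtain ⟨F, hFS, ⟨x, hx⟩, hSF, hF⟩ := exists_eqOn_subset_card_le hS I
  obtain ⟨y, hyS, hy⟩ := hI (x + 1)
  have hyF : y ∉ F := by
    obtain ⟨m, hm⟩ : I.Nonempty := card_pos.1 (hIc ▸ hc)
    intro hyF
    simpa [hy hm] using hF y hyF x hx hm
  obtain ⟨w, hwF, d, v, hvF, hchain, hFcard⟩ :=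
    ih F (ssubset_of_subset_of_ne hFS (by rintro rfl; exact hyF hyS)) ⟨x, hx⟩
  refine ⟨w, hFS hwF, d + 1, Fin.snoc v y, fun j ↦ ?_, ?_, ?_⟩
  · induction j using Fin.lastCases with
    | last => simpa using hyS
    | cast j => simpa using hFS (hvF j)
  · -- on `I`, `w` and every `v i` follow the pattern of `x`, and `y` the opposite one
    have hsnoc : (fun j ↦ (Fin.snoc v y : Fin (d + 1) → Fin ℓ → ZMod 2) j + w)
        = Fin.snoc (fun j ↦ v j + w) (y + w) := Fin.comp_snoc (· + w) v y
    rw [hsnoc]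
    refine hchain.snoc hIc.ge (fun m hm ↦ ?_) fun i ↦ disjoint_left.2 fun m hm ↦ ?_
    · simp [mem_suppF2_add, hy hm, hF w hwF x hx hm]
    · simp [mem_suppF2_add, hF (v i) (hvF i) w hwF hm]
  · calc #S ≤ 2 ^ c * #F := by simpa [ZMod.card, hIc] using hSF
      _ ≤ 2 ^ c * (2 ^ (c * d) * ∑ k ∈ range c, ℓ.choose k) := Nat.mul_le_mul_left _ hFcard
      _ = 2 ^ (c * (d + 1)) * ∑ k ∈ range c, ℓ.choose k := by ring

end Chains

lemma Real.div_logb_sub_le_of_le_two_pow_mul_pow {c d : ℕ} {x y : ℝ} (hc : 0 < c)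
    (hx : 0 < x) (hy : 0 < y) (h : x ≤ 2 ^ (c * d) * y ^ (c - 1)) :
    (1 : ℝ) / c * logb 2 x - (1 - (1 : ℝ) / c) * logb 2 y ≤ d := by
  have hc' : (0 : ℝ) < c := by exact_mod_cast hc
  have hlog : logb 2 x ≤ c * d + (c - 1) * logb 2 y := by
    calc logb 2 x ≤ logb 2 (2 ^ (c * d) * y ^ (c - 1)) :=
          logb_le_logb_of_le one_lt_two hx h
      _ = c * d + (c - 1) * logb 2 y := by
          rw [logb_mul (by positivity) (by positivity), logb_pow, logb_pow,
            logb_self_eq_one one_lt_two, Nat.cast_sub hc]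
          push_cast
          ring
  rw [← sub_nonneg]
  have : (d : ℝ) - (1 / c * logb 2 x - (1 - 1 / c) * logb 2 y)
      = (c * d + (c - 1) * logb 2 y - logb 2 x) / c := by
    field_simp
    ring
  rw [this]
  exact div_nonneg (by linarith) hc'.le

theorem increasing_chain_binary_general (c ℓ : ℕ) (hc : 0 < c) (hℓ : 0 < ℓ)
    (L : ℕ) (hL1 : 1 ≤ L)
    (S : Finset (Fin ℓ → ZMod 2)) (hS : S.card = L) :
    ∃ (w : Fin ℓ → ZMod 2) (d : ℕ) (v : Fin d → (Fin ℓ → ZMod 2)),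
      ((1 : ℝ) / c) * Real.logb 2 ((L : ℝ) / 2) - (1 - (1 : ℝ) / c) * Real.logb 2 ℓ ≤ d ∧
      (∀ j, v j ∈ S) ∧
      IncreasingChainF2 c (fun j => v j + w) := by
  obtain ⟨w, -, d, v, hvS, hchain, hcard⟩ :=
    exists_increasingChainF2_add_of_nonempty hc (card_pos.1 (hS ▸ hL1))
  refine ⟨w, d, v, Real.div_logb_sub_le_of_le_two_pow_mul_pow hc (by positivity)
    (by exact_mod_cast hℓ) ?_, hvS, hchain⟩
  have hL : L ≤ 2 ^ (c * d) * (2 * ℓ ^ (c - 1)) :=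
    hS ▸ hcard.trans (Nat.mul_le_mul_left _ (sum_range_choose_le_two_mul_pow hℓ hc))
  rw [div_le_iff₀ two_pos]
  calc (L : ℝ) ≤ 2 ^ (c * d) * (2 * ℓ ^ (c - 1)) := by exact_mod_cast hL
    _ = 2 ^ (c * d) * ℓ ^ (c - 1) * 2 := by ring

/-- Lemma 2.4: for all positive integers `c, ℓ` and `1 ≤ L ≤ 2^ℓ`, every `S ⊆ 𝔽₂^ℓ` with
`|S| = L` has a translate `S + w` containing a `c`-increasing chain of length at least
`(1/c) log₂ (L/2) - (1 - 1/c) log₂ ℓ`. -/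
theorem increasing_chain_binary (c ℓ : ℕ) (hc : 0 < c) (hℓ : 0 < ℓ)
    (L : ℕ) (hL1 : 1 ≤ L) (hL2 : L ≤ 2 ^ ℓ)
    (S : Finset (Fin ℓ → ZMod 2)) (hS : S.card = L) :
    ∃ (w : Fin ℓ → ZMod 2) (d : ℕ) (v : Fin d → (Fin ℓ → ZMod 2)),
      ((1 : ℝ) / c) * Real.logb 2 ((L : ℝ) / 2) - (1 - (1 : ℝ) / c) * Real.logb 2 ℓ ≤ d ∧
      (∀ j, v j ∈ S) ∧
      IncreasingChainF2 c (fun j => v j + w) :=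
  increasing_chain_binary_general c ℓ hc hℓ L hL1 S hS
end

section
/- Let q be a prime power. For all positive integers c, ℓ and every integer L with 1 ≤ L ≤ q^ℓ the following holds. For every set S ⊆ 𝔽_q^ℓ with |S| = L, there exist a vector w ∈ 𝔽_q^ℓ, an integer d with d ≥ (1/c)·log_q(L/2) − (1 − 1/c)·log_q((q−1)·ℓ), and vectors v₁, …, v_d ∈ S such that the sequence v₁ + w, v₂ + w, …, v_d + w is a c-increasing chain of length d. -/
/-- The support of a vector `v ∈ 𝔽_q^ℓ`: the set of coordinates where `v` is nonzero. -/
def suppQ {F : Type*} [Zero F] [DecidableEq F] {ℓ : ℕ} (v : Fin ℓ → F) : Finset (Fin ℓ) :=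
  Finset.univ.filter (fun i => v i ≠ 0)

/-- A sequence `v 0, …, v (d-1)` of vectors in `𝔽_q^ℓ` is a `c`-increasing chain if for
every `j`, `|supp(v j) \ (supp(v 0) ∪ ⋯ ∪ supp(v (j-1)))| ≥ c`. -/
def IncreasingChainQ {F : Type*} [Zero F] [DecidableEq F] {ℓ : ℕ} (c : ℕ) {d : ℕ}
    (v : Fin d → (Fin ℓ → F)) : Prop :=
  ∀ j : Fin d,
    c ≤ ((suppQ (v j)) \ ((Finset.Iio j).biUnion (fun i => suppQ (v i)))).card

/-!
Say that `T ⊆ F^ι` cross-shatters `C ⊆ ι` if every pattern `a` is avoided on all of `C` by some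
`t ∈ T`. A `q`-ary version of Pajor's form of the Sauer–Shelah lemma bounds `#T` by the number of
cross-shattered sets `C`, each weighted by `(q-1)^#C`; so once `#T` exceeds the Hamming ball
`∑_{i<c} (ℓ choose i) (q-1)^i ≤ 2((q-1)ℓ)^(c-1)`, some `c`-set `C` is cross-shattered. Restricting
to a largest fibre of `t ↦ t|_C` costs a factor `q^c` and recursion there gives a chain together
with a base point `u` of that fibre; as all of it agrees with `u` on `C`, appending an element of
`T` that differs from `u` on all of `C` keeps `v j - u` a `c`-increasing chain. Hence `T` has such
a chain of length `d + 1` once `#T > q^(c d)` times the ball, which is the logarithmic bound.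
-/

open Finset

section CrossShatters

variable {ι F : Type*}

def CrossShatters (T : Finset (ι → F)) (C : Finset ι) : Prop :=
  ∀ a : ι → F, ∃ t ∈ T, ∀ i ∈ C, t i ≠ a i

instance [Fintype ι] [DecidableEq ι] [Fintype F] [DecidableEq F] (T : Finset (ι → F))
    (C : Finset ι) : Decidable (CrossShatters T C) := by
  unfold CrossShatters; infer_instance

variable {T T' : Finset (ι → F)} {C C' : Finset ι}

theorem CrossShatters.mono_left (hT : T ⊆ T') (h : CrossShatters T C) : CrossShatters T' C :=
  fun a => let ⟨t, ht, hne⟩ := h a; ⟨t, hT ht, hne⟩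

theorem CrossShatters.mono_right (hC : C' ⊆ C) (h : CrossShatters T C) : CrossShatters T C' :=
  fun a => let ⟨t, ht, hne⟩ := h a; ⟨t, ht, fun i hi => hne i (hC hi)⟩

theorem Finset.Nonempty.crossShatters_empty (hT : T.Nonempty) : CrossShatters T ∅ :=
  fun _ => ⟨hT.choose, hT.choose_spec, by simp⟩

theorem CrossShatters.insert_of_fibers [DecidableEq ι] [DecidableEq F] {i : ι} {b b' : F}
    (hbb' : b ≠ b') (h : CrossShatters {t ∈ T | t i = b} C)
    (h' : CrossShatters {t ∈ T | t i = b'} C) : CrossShatters T (insert i C) := by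
  intro a
  obtain ⟨b'', hb'', hfib⟩ : ∃ b'', b'' ≠ a i ∧ CrossShatters {t ∈ T | t i = b''} C := by
    by_cases hb : b = a i
    · exact ⟨b', hb ▸ hbb'.symm, h'⟩
    · exact ⟨b, hb, h⟩
  obtain ⟨t, ht, hne⟩ := hfib a
  rw [mem_filter] at ht
  exact ⟨t, ht.1, (forall_mem_insert _ _ _).2 ⟨ht.2 ▸ hb'', hne⟩⟩

variable [Fintype ι] [DecidableEq ι] [Fintype F] [DecidableEq F]

theorem sum_ite_crossShatters_fibers_le {i : ι} (hi : i ∉ C) :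
    ∑ b, (if CrossShatters {t ∈ T | t i = b} C then (Fintype.card F - 1) ^ #C else 0) ≤
      (if CrossShatters T C then (Fintype.card F - 1) ^ #C else 0) +
        if CrossShatters T (insert i C) then (Fintype.card F - 1) ^ #(insert i C) else 0 := by
  -- One cross-shattering fibre gives `C`, two give `insert i C`, and there are `1 + (q - 1)` fibres.
  rw [← sum_filter, sum_const, smul_eq_mul, card_insert_of_notMem hi]
  set B : Finset F := {b | CrossShatters {t ∈ T | t i = b} C}
  obtain hB | ⟨b, hb⟩ := B.eq_empty_or_nonempty
  · simp [hB]
  rw [if_pos ((mem_filter.1 hb).2.mono_left (filter_subset _ _))]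
  obtain hB1 | hB1 := le_or_gt #B 1
  · exact le_add_right (mul_le_of_le_one_left' hB1)
  obtain ⟨b, hb, b', hb', hbb'⟩ := one_lt_card.1 hB1
  rw [if_pos ((mem_filter.1 hb).2.insert_of_fibers hbb' (mem_filter.1 hb').2)]
  have hBq : #B ≤ Fintype.card F - 1 + 1 := by
    have := card_le_univ B; have := Fintype.card_pos_iff.2 ⟨b⟩; omega
  calc #B * (Fintype.card F - 1) ^ #C
      ≤ (Fintype.card F - 1 + 1) * (Fintype.card F - 1) ^ #C := Nat.mul_le_mul_right _ hBq
    _ = _ := by ring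

theorem card_le_sum_crossShatters (V : Finset ι) (hT : ∀ s ∈ T, ∀ t ∈ T, ∀ i ∉ V, s i = t i) :
    #T ≤ ∑ C ∈ V.powerset with CrossShatters T C, (Fintype.card F - 1) ^ #C := by
  rw [sum_filter]
  induction V using Finset.induction_on generalizing T with
  | empty =>
    obtain rfl | hne := T.eq_empty_or_nonempty
    · simp
    rw [powerset_empty, sum_singleton, if_pos hne.crossShatters_empty, card_empty, pow_zero]
    exact card_le_one.2 fun s hs t ht => funext fun i => hT s hs t ht i (notMem_empty i)
  | insert i V hi ih =>
    have hfib (b : F) : ∀ s ∈ {t ∈ T | t i = b}, ∀ t ∈ {t ∈ T | t i = b}, ∀ j ∉ V, s j = t j := by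
      intro s hs t ht j hj
      rw [mem_filter] at hs ht
      by_cases hji : j = i
      · rw [hji, hs.2, ht.2]
      · exact hT s hs.1 t ht.1 j (by simp [hji, hj])
    calc #T = ∑ b, #{t ∈ T | t i = b} := card_eq_sum_card_fiberwise fun _ _ => mem_univ _
      _ ≤ ∑ b, ∑ C ∈ V.powerset,
            if CrossShatters {t ∈ T | t i = b} C then (Fintype.card F - 1) ^ #C else 0 :=
          sum_le_sum fun b _ => ih (hfib b)
      _ = ∑ C ∈ V.powerset, ∑ b,
            if CrossShatters {t ∈ T | t i = b} C then (Fintype.card F - 1) ^ #C else 0 :=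
          sum_comm
      _ ≤ ∑ C ∈ V.powerset, ((if CrossShatters T C then (Fintype.card F - 1) ^ #C else 0) +
            if CrossShatters T (insert i C) then (Fintype.card F - 1) ^ #(insert i C) else 0) :=
          sum_le_sum fun C hC =>
            sum_ite_crossShatters_fibers_le fun hiC => hi (mem_powerset.1 hC hiC)
      _ = _ := by rw [sum_add_distrib, sum_powerset_insert hi]

theorem exists_crossShatters_card_eq {c : ℕ}
    (h : ∑ i ∈ range c, (Fintype.card ι).choose i * (Fintype.card F - 1) ^ i < #T) :
    ∃ C, #C = c ∧ CrossShatters T C := by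
  by_contra! hno
  have hsmall (C : Finset ι) (hC : CrossShatters T C) : #C < c := by
    by_contra! hle
    obtain ⟨C', hC', hC'c⟩ := exists_subset_card_eq hle
    exact hno C' hC'c (hC.mono_right hC')
  refine h.not_ge ?_
  calc #T ≤ ∑ C ∈ univ.powerset with CrossShatters T C, (Fintype.card F - 1) ^ #C :=
        card_le_sum_crossShatters univ (by simp)
    _ ≤ ∑ C ∈ univ.powerset with #C < c, (Fintype.card F - 1) ^ #C :=
        sum_le_sum_of_subset (monotone_filter_right _ fun C _ => hsmall C)
    _ = ∑ m ∈ range (Fintype.card ι + 1) with m < c,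
          (Fintype.card ι).choose m * (Fintype.card F - 1) ^ m := by
        rw [sum_filter, sum_filter, sum_powerset_apply_card
          (fun m => if m < c then (Fintype.card F - 1) ^ m else 0), card_univ]
        simp [mul_ite]
    _ ≤ _ := sum_le_sum_of_subset fun m hm => mem_range.2 (mem_filter.1 hm).2

end CrossShatters

theorem exists_lt_card_filter_restrict_eq {ι F : Type*} [DecidableEq ι] [Fintype F] [DecidableEq F]
    (C : Finset ι) {T : Finset (ι → F)} {N : ℕ} (h : Fintype.card F ^ #C * N < #T) :
    ∃ y : C → F, N < #{t ∈ T | C.restrict t = y} := by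
  obtain ⟨y, -, hy⟩ := exists_lt_card_fiber_of_mul_lt_card_of_maps_to
    (f := C.restrict (π := fun _ => F)) (t := univ) (fun _ _ => mem_univ _)
    (by simpa [Fintype.card_fun] using h)
  exact ⟨y, hy⟩

theorem sum_range_choose_mul_pow_le {n k c : ℕ} (hn : 0 < n) (hk : 0 < k) (hc : 0 < c) :
    ∑ i ∈ range c, n.choose i * k ^ i ≤ 2 * (k * n) ^ (c - 1) := by
  obtain ⟨c, rfl⟩ : ∃ c', c = c' + 1 := ⟨c - 1, by omega⟩
  rw [Nat.add_sub_cancel]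
  obtain hkn | hkn := lt_or_ge (k * n) 2
  · obtain ⟨rfl, rfl⟩ : k = 1 ∧ n = 1 := by
      constructor <;> nlinarith
    calc ∑ i ∈ range (c + 1), Nat.choose 1 i * 1 ^ i ≤ ∑ i ∈ range 2, Nat.choose 1 i * 1 ^ i :=
          sum_le_sum_of_ne_zero fun i _ hi => mem_range.2 <| by
            by_contra! h; exact hi (by simp [Nat.choose_eq_zero_of_lt (by omega : 1 < i)])
      _ = 2 * (1 * 1) ^ c := by simp [sum_range_succ]
  calc ∑ i ∈ range (c + 1), n.choose i * k ^ i ≤ ∑ i ∈ range (c + 1), (k * n) ^ i :=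
        sum_le_sum fun i _ => by
          rw [mul_pow, mul_comm]; exact Nat.mul_le_mul_left _ (Nat.choose_le_pow n i)
    _ = ∑ i ∈ range c, (k * n) ^ i + (k * n) ^ c := sum_range_succ _ _
    _ ≤ 2 * (k * n) ^ c := by
        have := Nat.geomSum_lt (s := range c) hkn fun i hi => mem_range.1 hi; omega

theorem pow_mul_pow_lt_of_lt_logb {b x y : ℝ} (hb : 1 < b) (hx : 0 < x) (hy : 0 < y) {c e : ℕ}
    (hc : 0 < c) (h : (e : ℝ) < 1 / c * Real.logb b y - (1 - 1 / c) * Real.logb b x) :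
    b ^ (c * e) * x ^ (c - 1) < y := by
  have hc' : (0 : ℝ) < c := by exact_mod_cast hc
  have hscaled : (c : ℝ) * (1 / c * Real.logb b y - (1 - 1 / c) * Real.logb b x) =
      Real.logb b y - (c - 1) * Real.logb b x := by
    field_simp
  have hmul := mul_lt_mul_of_pos_left h hc'
  rw [← Real.logb_lt_logb_iff hb (by positivity) hy, Real.logb_mul (by positivity) (by positivity),
    Real.logb_pow, Real.logb_pow, Real.logb_self_eq_one hb]
  push_cast [Nat.cast_sub hc]
  linarith

theorem sum_range_choose_mul_pow_mul_pow_lt {q ℓ c e L : ℕ} (hq : 1 < q) (hℓ : 0 < ℓ)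
    (hc : 0 < c) (hL : 1 ≤ L) (he : (e : ℝ) <
      1 / c * Real.logb q ((L : ℝ) / 2) - (1 - 1 / c) * Real.logb q (((q : ℝ) - 1) * ℓ)) :
    (∑ i ∈ range c, ℓ.choose i * (q - 1) ^ i) * q ^ (c * e) < L := by
  have hreal := pow_mul_pow_lt_of_lt_logb (b := q) (x := ((q : ℝ) - 1) * ℓ) (y := L / 2)
    (by exact_mod_cast hq) (mul_pos (by simpa using hq) (by exact_mod_cast hℓ)) (by positivity)
    hc he
  have hcast : ((2 * ((q - 1) * ℓ) ^ (c - 1) * q ^ (c * e) : ℕ) : ℝ) < L := by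
    push_cast [Nat.cast_sub hq.le]
    linarith
  calc (∑ i ∈ range c, ℓ.choose i * (q - 1) ^ i) * q ^ (c * e)
      ≤ 2 * ((q - 1) * ℓ) ^ (c - 1) * q ^ (c * e) :=
        Nat.mul_le_mul_right _ (sum_range_choose_mul_pow_le hℓ (by omega) hc)
    _ < L := by exact_mod_cast hcast

section Chain

variable {F : Type*} {ℓ : ℕ}

theorem mem_suppQ [Zero F] [DecidableEq F] {v : Fin ℓ → F} {i : Fin ℓ} :
    i ∈ suppQ v ↔ v i ≠ 0 := by
  simp [suppQ]

theorem IncreasingChainQ.snoc [Zero F] [DecidableEq F] {c n : ℕ} {v : Fin n → Fin ℓ → F}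
    (hv : IncreasingChainQ c v) {x : Fin ℓ → F} {C : Finset (Fin ℓ)} (hC : c ≤ #C)
    (hvC : ∀ j, ∀ i ∈ C, v j i = 0) (hxC : ∀ i ∈ C, x i ≠ 0) :
    IncreasingChainQ c (Fin.snoc v x : Fin (n + 1) → Fin ℓ → F) := by
  intro j
  induction j using Fin.lastCases with
  | last =>
    refine hC.trans (card_le_card fun i hi => mem_sdiff.2 ⟨?_, ?_⟩)
    · simpa [mem_suppQ] using hxC i hi
    · rw [Fin.Iio_last_eq_map]; simp [mem_suppQ, hvC _ i hi]
  | cast j =>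
    rw [Fin.Iio_castSucc, map_eq_image, image_biUnion]
    simpa using hv j

theorem CrossShatters.exists_snoc_increasingChainQ [AddGroup F] [DecidableEq F] {c n : ℕ}
    {T : Finset (Fin ℓ → F)} {C : Finset (Fin ℓ)} (hT : CrossShatters T C) (hC : c ≤ #C)
    {u : Fin ℓ → F} {v : Fin n → Fin ℓ → F} (hvC : ∀ j, ∀ i ∈ C, v j i = u i)
    (hv : IncreasingChainQ c fun j => v j - u) :
    ∃ s ∈ T, IncreasingChainQ c fun j => (Fin.snoc v s : Fin (n + 1) → Fin ℓ → F) j - u := by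
  obtain ⟨s, hs, hsu⟩ := hT u
  refine ⟨s, hs, ?_⟩
  have := hv.snoc hC (x := s - u) (fun j i hi => by simp [hvC j i hi])
    fun i hi => sub_ne_zero.2 (hsu i hi)
  convert this using 1
  exact Fin.comp_snoc (· - u) v s

theorem exists_increasingChainQ_sub [AddGroup F] [Fintype F] [DecidableEq F] {c : ℕ} (d : ℕ)
    {T : Finset (Fin ℓ → F)}
    (h : (∑ i ∈ range c, ℓ.choose i * (Fintype.card F - 1) ^ i) * Fintype.card F ^ (c * d) < #T) :
    ∃ u ∈ T, ∃ v : Fin (d + 1) → Fin ℓ → F, (∀ j, v j ∈ T) ∧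
      IncreasingChainQ c fun j => v j - u := by
  induction d generalizing T with
  | zero =>
    obtain ⟨C, hCc, hC⟩ := exists_crossShatters_card_eq (ι := Fin ℓ) (by simpa using h)
    obtain ⟨u, hu, -⟩ := hC 0
    obtain ⟨s, hs, hchain⟩ := hC.exists_snoc_increasingChainQ hCc.ge (u := u) (v := Fin.elim0)
      (fun j => j.elim0) (fun j => j.elim0)
    exact ⟨u, hu, _, Fin.forall_fin_one.2 (by simpa), hchain⟩
  | succ d ih =>
    have hq : 0 < Fintype.card F := Fintype.card_pos
    obtain ⟨C, hCc, hC⟩ := exists_crossShatters_card_eq (ι := Fin ℓ)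
      (by simpa using (Nat.le_mul_of_pos_right _ (pow_pos hq _)).trans_lt h)
    obtain ⟨y, hy⟩ := exists_lt_card_filter_restrict_eq C (N := _ * Fintype.card F ^ (c * d)) (by
      rw [hCc, mul_left_comm, ← pow_add]
      convert h using 3; ring)
    obtain ⟨u, hu, v, hvT, hv⟩ := ih hy
    have hagree (t) (ht : t ∈ {t ∈ T | C.restrict t = y}) (i) (hi : i ∈ C) : t i = u i := by
      simpa using congrFun ((mem_filter.1 ht).2.trans (mem_filter.1 hu).2.symm) ⟨i, hi⟩
    obtain ⟨s, hs, hchain⟩ := hC.exists_snoc_increasingChainQ hCc.ge (fun j => hagree _ (hvT j)) hv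
    refine ⟨u, (mem_filter.1 hu).1, Fin.snoc v s, fun j => ?_, hchain⟩
    induction j using Fin.lastCases with
    | last => simpa using hs
    | cast j => simpa using (mem_filter.1 (hvT j)).1

end Chain

theorem increasing_chain_qary_general (F : Type*) [Field F] [Fintype F] [DecidableEq F]
    (c ℓ : ℕ) (hc : 0 < c) (hℓ : 0 < ℓ)
    (L : ℕ) (hL1 : 1 ≤ L)
    (S : Finset (Fin ℓ → F)) (hS : S.card = L) :
    ∃ (w : Fin ℓ → F) (d : ℕ) (v : Fin d → (Fin ℓ → F)),
      ((1 : ℝ) / c) * Real.logb (Fintype.card F) ((L : ℝ) / 2) -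
          (1 - (1 : ℝ) / c) *
            Real.logb (Fintype.card F) (((Fintype.card F : ℝ) - 1) * ℓ) ≤ d ∧
      (∀ j, v j ∈ S) ∧
      IncreasingChainQ c (fun j => v j + w) := by
  set q := Fintype.card F
  set R := ((1 : ℝ) / c) * Real.logb q ((L : ℝ) / 2) -
    (1 - (1 : ℝ) / c) * Real.logb q (((q : ℝ) - 1) * ℓ)
  obtain hR | hR := le_or_gt R 0
  · exact ⟨0, 0, Fin.elim0, by simpa using hR, fun j => j.elim0, fun j => j.elim0⟩
  have hceil : 0 < ⌈R⌉₊ := Nat.ceil_pos.2 hR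
  set e := ⌈R⌉₊ - 1
  have he : (e : ℝ) < R := Nat.lt_ceil.1 (by omega)
  have hlt : (∑ i ∈ range c, ℓ.choose i * (q - 1) ^ i) * q ^ (c * e) < #S :=
    hS ▸ sum_range_choose_mul_pow_mul_pow_lt Fintype.one_lt_card hℓ hc hL1 he
  obtain ⟨u, -, v, hvS, hv⟩ := exists_increasingChainQ_sub e hlt
  refine ⟨-u, e + 1, v, ?_, hvS, by simpa only [sub_eq_add_neg] using hv⟩
  calc R ≤ ⌈R⌉₊ := Nat.le_ceil R
    _ = (e + 1 : ℕ) := by congr 1; omega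

/-- Lemma 6.2 (`q`-ary increasing chains): for a prime power `q` (realized as the
cardinality of a finite field `F`), all positive integers `c, ℓ` and `1 ≤ L ≤ q^ℓ`,
every `S ⊆ 𝔽_q^ℓ` with `|S| = L` has a translate `S + w` containing a `c`-increasing
chain of length at least `(1/c) log_q (L/2) - (1 - 1/c) log_q ((q-1) ℓ)`. -/
theorem increasing_chain_qary (F : Type*) [Field F] [Fintype F] [DecidableEq F]
    (c ℓ : ℕ) (hc : 0 < c) (hℓ : 0 < ℓ)
    (L : ℕ) (hL1 : 1 ≤ L) (hL2 : L ≤ Fintype.card F ^ ℓ)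
    (S : Finset (Fin ℓ → F)) (hS : S.card = L) :
    ∃ (w : Fin ℓ → F) (d : ℕ) (v : Fin d → (Fin ℓ → F)),
      ((1 : ℝ) / c) * Real.logb (Fintype.card F) ((L : ℝ) / 2) -
          (1 - (1 : ℝ) / c) *
            Real.logb (Fintype.card F) (((Fintype.card F : ℝ) - 1) * ℓ) ≤ d ∧
      (∀ j, v j ∈ S) ∧
      IncreasingChainQ c (fun j => v j + w) :=
  increasing_chain_qary_general F c ℓ hc hℓ L hL1 S hS
end

section
/- (q-ary Sauer-Shelah lemma) For all integers q ≥ 2, ℓ ≥ 1, c ≥ 1 and every set S ⊆ [q]^ℓ: if |S| > 2·((q−1)·ℓ)^(c−1), then there exists a set of coordinates U ⊆ [ℓ] with |U| = c such that for every u ∈ [q]^U there exists some v ∈ S with the property that the restriction v|_U differs from u in every coordinate of U. -/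
/-!
Call `U` q-shattered by `S` if every `u` is avoided on all of `U` by some `v ∈ S`. A Pajor-type
induction over the coordinates, splitting `S` into the fibres `{v ∈ S | v j = a}`, gives
`|S| ≤ ∑ (q - 1) ^ |U|` over the q-shattered sets `U`: a set q-shattered by one fibre is
q-shattered by `S`, and a set `U` q-shattered by two different fibres makes `insert j U`
q-shattered. Being q-shattered is closed under subsets, so if no `c`-set is q-shattered, all
q-shattered sets are smaller than `c` and `|S| ≤ ∑_{j < c} C(ℓ, j) (q - 1) ^ j`, which a
geometric series bounds by `2 ((q - 1) ℓ) ^ (c - 1)`.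
-/

open Finset Fintype

section QShatters

variable {ι α : Type*}

/-- For `α = Bool` this is ordinary shattering: `v` avoids `u` on `U` iff `v|_U` is the
complement of `u|_U`. -/
def QShatters (S : Finset (ι → α)) (U : Finset ι) : Prop :=
  ∀ u : ι → α, ∃ v ∈ S, ∀ i ∈ U, v i ≠ u i

instance [DecidableEq ι] [Fintype ι] [DecidableEq α] [Fintype α] (S : Finset (ι → α))
    (U : Finset ι) : Decidable (QShatters S U) :=
  inferInstanceAs (Decidable (∀ u : ι → α, ∃ v ∈ S, ∀ i ∈ U, v i ≠ u i))

variable {S S' : Finset (ι → α)} {U U' : Finset ι}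

theorem QShatters.mono_left (hSS' : S ⊆ S') (h : QShatters S U) : QShatters S' U := fun u ↦
  let ⟨v, hv, hvu⟩ := h u
  ⟨v, hSS' hv, hvu⟩

theorem QShatters.mono_right (hUU' : U' ⊆ U) (h : QShatters S U) : QShatters S U' := fun u ↦
  let ⟨v, hv, hvu⟩ := h u
  ⟨v, hv, fun i hi ↦ hvu i (hUU' hi)⟩

variable [DecidableEq ι] [DecidableEq α]

theorem QShatters.insert_of_fibers {j : ι} {a b : α} (hab : a ≠ b)
    (ha : QShatters {v ∈ S | v j = a} U) (hb : QShatters {v ∈ S | v j = b} U) :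
    QShatters S (insert j U) := by
  intro u
  obtain ⟨c, hc, hcu⟩ : ∃ c, QShatters {v ∈ S | v j = c} U ∧ c ≠ u j := by
    by_cases hau : a = u j
    · exact ⟨b, hb, hau ▸ hab.symm⟩
    · exact ⟨a, ha, hau⟩
  obtain ⟨v, hv, hvu⟩ := hc u
  rw [mem_filter] at hv
  refine ⟨v, hv.1, fun i hi ↦ ?_⟩
  rcases mem_insert.1 hi with rfl | hi
  · exact hv.2 ▸ hcu
  · exact hvu i hi

variable [Fintype ι] [Fintype α]

theorem sum_fibers_qShatters_le (j : ι) (U : Finset ι) (w : ℕ) :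
    ∑ a : α, (if QShatters {v ∈ S | v j = a} U then w else 0) ≤
      (if QShatters S U then w else 0) +
        (if QShatters S (insert j U) then w * (card α - 1) else 0) := by
  rw [sum_ite, sum_const_zero, add_zero, sum_const, smul_eq_mul]
  set T : Finset α := {a | QShatters {v ∈ S | v j = a} U}
  obtain hT | ⟨a, ha⟩ := T.eq_empty_or_nonempty
  · simp [hT]
  have hU : QShatters S U := (mem_filter.1 ha).2.mono_left (filter_subset _ _)
  rw [if_pos hU]
  obtain hT1 | hT2 := le_or_gt #T 1
  · exact le_add_right (by simpa using Nat.mul_le_mul_right w hT1)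
  obtain ⟨a, ha, b, hb, hab⟩ := one_lt_card.1 hT2
  rw [if_pos ((mem_filter.1 ha).2.insert_of_fibers hab (mem_filter.1 hb).2)]
  have : #T ≤ 1 + (card α - 1) := (card_le_univ T).trans (by omega)
  nlinarith

theorem card_le_sum_pow_card_qShatters (A : Finset ι) (S : Finset (ι → α))
    (hS : ∀ v ∈ S, ∀ w ∈ S, ∀ i ∉ A, v i = w i) :
    #S ≤ ∑ U ∈ A.powerset with QShatters S U, (card α - 1) ^ #U := by
  induction A using Finset.induction_on generalizing S with
  | empty =>
    obtain rfl | ⟨v, hv⟩ := S.eq_empty_or_nonempty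
    · simp
    have hS₁ : #S ≤ 1 := card_le_one.2 fun v hv w hw ↦ funext fun i ↦ hS v hv w hw i (by simp)
    have : QShatters S ∅ := fun _ ↦ ⟨v, hv, by simp⟩
    rwa [powerset_empty, sum_filter, sum_singleton, if_pos this, Finset.card_empty, pow_zero]
  | insert j A hj ih =>
    have hfib (a : α) :
        ∀ v ∈ {v ∈ S | v j = a}, ∀ w ∈ {v ∈ S | v j = a}, ∀ i ∉ A, v i = w i := by
      intro v hv w hw i hi
      simp only [mem_filter] at hv hw
      by_cases hij : i = j
      · rw [hij, hv.2, hw.2]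
      · exact hS v hv.1 w hw.1 i (by simp [hij, hi])
    calc #S = ∑ a : α, #{v ∈ S | v j = a} := card_eq_sum_card_fiberwise fun _ _ ↦ mem_univ _
      _ ≤ ∑ a : α, ∑ U ∈ A.powerset with QShatters {v ∈ S | v j = a} U, (card α - 1) ^ #U :=
        sum_le_sum fun a _ ↦ ih _ (hfib a)
      _ = ∑ U ∈ A.powerset, ∑ a : α,
            if QShatters {v ∈ S | v j = a} U then (card α - 1) ^ #U else 0 := by
        simp_rw [sum_filter]; exact sum_comm
      _ ≤ ∑ U ∈ A.powerset, ((if QShatters S U then (card α - 1) ^ #U else 0) +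
            if QShatters S (insert j U) then (card α - 1) ^ #(insert j U) else 0) := by
        refine sum_le_sum fun U hU ↦ ?_
        rw [card_insert_of_notMem fun hjU ↦ hj (mem_powerset.1 hU hjU), pow_succ]
        exact sum_fibers_qShatters_le j U _
      _ = ∑ U ∈ (insert j A).powerset with QShatters S U, (card α - 1) ^ #U := by
        rw [sum_add_distrib, sum_filter, sum_powerset_insert hj]

end QShatters

theorem sum_pow_card_le_sum_choose_mul_pow {ι : Type*} [Fintype ι] {𝒰 : Finset (Finset ι)}
    {c : ℕ} (h𝒰 : ∀ U ∈ 𝒰, #U < c) (x : ℕ) :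
    ∑ U ∈ 𝒰, x ^ #U ≤ ∑ j ∈ range c, (card ι).choose j * x ^ j := by
  rw [← sum_fiberwise_of_maps_to (g := card) fun U hU ↦ mem_range.2 (h𝒰 U hU)]
  refine sum_le_sum fun j _ ↦ ?_
  have h𝒰j : {U ∈ 𝒰 | #U = j} ⊆ powersetCard j univ := fun U hU ↦
    mem_powersetCard_univ.2 (mem_filter.1 hU).2
  calc ∑ U ∈ 𝒰 with #U = j, x ^ #U = #{U ∈ 𝒰 | #U = j} * x ^ j := by
        rw [Finset.sum_congr rfl fun U hU ↦ by rw [(mem_filter.1 hU).2], sum_const, smul_eq_mul]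
    _ ≤ (card ι).choose j * x ^ j := by
        gcongr
        simpa using card_le_card h𝒰j

theorem sum_choose_mul_pow_le {n x : ℕ} (hxn : 1 ≤ x * n) (c : ℕ) :
    ∑ j ∈ range c, n.choose j * x ^ j ≤ 2 * (x * n) ^ (c - 1) := by
  obtain _ | c := c
  · simp
  obtain hxn | hxn := hxn.eq_or_lt
  · obtain ⟨rfl, rfl⟩ : x = 1 ∧ n = 1 := by simpa [eq_comm] using hxn
    calc ∑ j ∈ range (c + 1), Nat.choose 1 j * 1 ^ j ≤ ∑ j ∈ range 2, Nat.choose 1 j := by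
          simp only [one_pow, mul_one]
          exact sum_le_sum_of_ne_zero fun j _ hj ↦ by
            simpa [Nat.lt_succ_iff] using Nat.choose_eq_zero_iff.not.1 hj
      _ = 2 * (1 * 1) ^ (c + 1 - 1) := by simp [Nat.sum_range_choose 1]
  calc ∑ j ∈ range (c + 1), n.choose j * x ^ j ≤ ∑ j ∈ range (c + 1), (x * n) ^ j := by
        refine sum_le_sum fun j _ ↦ ?_
        rw [mul_pow, mul_comm]
        exact Nat.mul_le_mul_left _ (Nat.choose_le_pow n j)
    _ = ∑ j ∈ range c, (x * n) ^ j + (x * n) ^ c := sum_range_succ _ _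
    _ ≤ 2 * (x * n) ^ (c + 1 - 1) := by
        have := Nat.geomSum_lt (s := range c) (n := c) hxn fun j hj ↦ mem_range.1 hj
        simp only [add_tsub_cancel_right]
        omega

theorem qary_sauer_shelah_general (q ℓ c : ℕ) (hq : 2 ≤ q) (hℓ : 1 ≤ ℓ)
    (S : Finset (Fin ℓ → Fin q)) (hS : 2 * ((q - 1) * ℓ) ^ (c - 1) < S.card) :
    ∃ U : Finset (Fin ℓ), U.card = c ∧
      ∀ u : Fin ℓ → Fin q, ∃ v ∈ S, ∀ i ∈ U, v i ≠ u i := by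
  by_contra! hnone
  have hsmall (U : Finset (Fin ℓ)) (hU : QShatters S U) : #U < c := by
    by_contra! hcU
    obtain ⟨U', hU'U, hU'⟩ := exists_subset_card_eq hcU
    obtain ⟨u, hu⟩ := hnone U' hU'
    obtain ⟨v, hv, hvu⟩ := hU.mono_right hU'U u
    obtain ⟨i, hi, hvi⟩ := hu v hv
    exact hvu i hi hvi
  refine hS.not_ge ?_
  calc #S ≤ ∑ U ∈ univ.powerset with QShatters S U, (q - 1) ^ #U := by
        simpa using card_le_sum_pow_card_qShatters univ S (by simp)
    _ ≤ ∑ j ∈ range c, ℓ.choose j * (q - 1) ^ j := by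
        simpa using
          sum_pow_card_le_sum_choose_mul_pow (fun U hU ↦ hsmall U (mem_filter.1 hU).2) _
    _ ≤ 2 * ((q - 1) * ℓ) ^ (c - 1) := sum_choose_mul_pow_le (Nat.mul_pos (by omega) hℓ) c

/-- Lemma 6.3 (`q`-ary Sauer-Shelah): for integers `q ≥ 2`, `ℓ ≥ 1`, `c ≥ 1` and any
`S ⊆ [q]^ℓ` with `|S| > 2 ((q-1) ℓ)^(c-1)`, there is a set `U` of `c` coordinates such
that for every `u ∈ [q]^U` there is some `v ∈ S` whose restriction to `U` differs from
`u` in every coordinate of `U`. -/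
theorem qary_sauer_shelah (q ℓ c : ℕ) (hq : 2 ≤ q) (hℓ : 1 ≤ ℓ) (hc : 1 ≤ c)
    (S : Finset (Fin ℓ → Fin q)) (hS : 2 * ((q - 1) * ℓ) ^ (c - 1) < S.card) :
    ∃ U : Finset (Fin ℓ), U.card = c ∧
      ∀ u : Fin ℓ → Fin q, ∃ v ∈ S, ∀ i ∈ U, v i ≠ u i :=
  qary_sauer_shelah_general q ℓ c hq hℓ S hS
end

section
/- Let p ∈ (0, 1/2) and let δ_p > 0 and n₀ be such that for all n ≥ n₀ and every x ∈ 𝔽₂ⁿ, two independent uniform samples w₁, w₂ from B_n(0,p) satisfy Pr[w₁ + w₂ ∈ B_n(x,p)] ≤ 2^(−δ_p·n). Then for all n ≥ n₀, all positive integers ℓ and L with L + 1 ≤ 2^ℓ and d := ⌊(1/2)·log₂(L/2) − (1/2)·log₂ ℓ⌋ ≥ 1, and every set S ⊆ 𝔽₂^ℓ with |S| = L + 1, the following holds: if X₁, …, X_ℓ are picked independently and uniformly at random from B_n(0,p) and for v ∈ 𝔽₂^ℓ we set X_v = Σ_{i=1}^ℓ v_i·X_i, then Pr[for all v ∈ S,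 X_v ∈ B_n(0,p)] ≤ 2ⁿ · 2^(−δ_p·d·n). -/
/-!
More than `ℓ + 1` binary vectors of length `ℓ` shatter some pair of coordinates (Sauer–Shelah).
Since `|S| > (ℓ + 1) 4^d`, taking a shattered pair `a, b`, then the largest of the four classes
of `S` on which `(v a, v b)` is constant, and repeating `d` times, yields `s` and `t₁, …, t_d`
with `s + t_k ∈ S` such that `t_k` equals `1` at two coordinates `a_k ≠ b_k` at which every
later `t_{k'}` vanishes.

On the event, with `B := B_n(0,p)`, the vector `y := X_s` satisfies
`y + X_{t_k} = X_{s + t_k} ∈ B` for all `k`. For fixed `y`, freezing all coordinates of `X`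
except `a₁, b₁` turns the first constraint into `x + (X_{a₁} + X_{b₁}) ∈ B`, which has
probability at most `2^{-δn}` by hypothesis, while the other constraints do not involve
`X_{a₁}, X_{b₁}`. Peeling off the pairs one at a time bounds the probability by `2^{-δdn}`, and
the union over the `2^n` values of `y` costs the factor `2^n`. The hypothesis on `d` says
precisely that `2ℓ 4^d ≤ L`.
-/

open Finset Function

def IsPairChain {ι R : Type*} [Zero R] [One R] : {r : ℕ} → (Fin r → ι → R) → Prop
  | 0, _ => True
  | r + 1, t =>
      (∃ a b, a ≠ b ∧ t 0 a = 1 ∧ t 0 b = 1 ∧ ∀ k : Fin r, t k.succ a = 0 ∧ t k.succ b = 0) ∧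
        IsPairChain (Fin.tail t)

section Peeling

variable {ι R V : Type*} [Fintype ι] [DecidableEq ι] [Ring R] [AddCommGroup V] [Module R V]

theorem sum_smul_update (c : ι → R) (X : ι → V) (a : ι) (u : V) :
    ∑ i, c i • update X a u i = ∑ i, c i • X i + c a • (u - X a) := by
  rw [← add_sum_erase _ _ (mem_univ a), ← add_sum_erase _ _ (mem_univ a), update_self,
    sum_congr rfl fun i hi => by rw [update_of_ne (ne_of_mem_erase hi)], smul_sub]
  abel

variable [DecidableEq V]

def chainEvent {r : ℕ} (B : Finset V) (y : V) (t : Fin r → ι → R) : Finset (ι → V) :=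
  {X ∈ Fintype.piFinset fun _ => B | ∀ k, y + ∑ i, t k i • X i ∈ B}

variable {B : Finset V} {η : ℝ} {r : ℕ} {t : Fin (r + 1) → ι → R} {a b : ι}

theorem mapsTo_update_update_chainEvent (hab : a ≠ b)
    (hlater : ∀ k : Fin r, t k.succ a = 0 ∧ t k.succ b = 0) (y : V) :
    Set.MapsTo (fun z : (ι → V) × V × V => update (update z.1 a z.2.1) b z.2.2)
      ↑(chainEvent B y t ×ˢ B ×ˢ B) ↑(chainEvent B y (Fin.tail t)) := by
  rintro ⟨X, u, v⟩ hz
  simp only [coe_product, Set.mem_prod, mem_coe, chainEvent, mem_filter,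
    Fintype.mem_piFinset] at hz ⊢
  refine ⟨fun i => ?_, fun k => ?_⟩
  · simp only [update_apply]
    split_ifs
    exacts [hz.2.2, hz.2.1, hz.1.1 i]
  · simpa [sum_smul_update, update_of_ne hab.symm, Fin.tail, hlater] using hz.1.2 k.succ

theorem card_fiber_update_update_le (hab : a ≠ b) (ha : t 0 a = 1) (hb : t 0 b = 1)
    (y : V) (Z : ι → V) :
    #{z ∈ chainEvent B y t ×ˢ B ×ˢ B | update (update z.1 a z.2.1) b z.2.2 = Z}
      ≤ #{w ∈ B ×ˢ B | (y + ∑ i, t 0 i • Z i - Z a - Z b) + (w.1 + w.2) ∈ B} := by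
  refine card_le_card_of_injOn (fun z => (z.1 a, z.1 b)) ?_ ?_
  · rintro ⟨X, u, v⟩ hz
    simp only [coe_filter, mem_product, chainEvent, mem_filter, Fintype.mem_piFinset] at hz
    obtain ⟨⟨⟨hX, hXt⟩, -, -⟩, rfl⟩ := hz
    simp only [mem_coe, mem_filter, mem_product, hX, true_and, sum_smul_update, ha, hb, one_smul,
      update_of_ne hab.symm, update_of_ne hab, update_self]
    convert hXt 0 using 1
    abel
  · rintro ⟨X, u, v⟩ hz ⟨X', u', v'⟩ hz' hcoord
    simp only [coe_filter] at hz hz'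
    simp only [Prod.mk.injEq] at hcoord
    have hZ := congrFun (hz.2.trans hz'.2.symm)
    refine Prod.ext (funext fun i => ?_) (Prod.ext ?_ ?_)
    · by_cases hia : i = a
      · exact hia ▸ hcoord.1
      by_cases hib : i = b
      · exact hib ▸ hcoord.2
      simpa [hia, hib] using hZ i
    · simpa [hab] using hZ a
    · simpa using hZ b

/-- Replacing the coordinates `a, b` of a point of the event by arbitrary `u, v ∈ B` lands in the
event of the tail chain; over a point of the latter, the fibre injects into the pairs counted by
`hB`. -/
theorem card_chainEvent_le_mul_card_chainEvent_tail (hη : 0 ≤ η)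
    (hB : ∀ x, (#{w ∈ B ×ˢ B | x + (w.1 + w.2) ∈ B} : ℝ) / #B ^ 2 ≤ η)
    (hab : a ≠ b) (ha : t 0 a = 1) (hb : t 0 b = 1)
    (hlater : ∀ k : Fin r, t k.succ a = 0 ∧ t k.succ b = 0) (y : V) :
    (#(chainEvent B y t) : ℝ) ≤ η * #(chainEvent B y (Fin.tail t)) := by
  obtain hB0 | hBpos := (#B).eq_zero_or_pos
  · have hempty : chainEvent B y t = ∅ := by
      ext X
      simp [chainEvent, card_eq_zero.1 hB0]
    simp only [hempty, card_empty, Nat.cast_zero]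
    positivity
  have hpair : ∀ x, (#{w ∈ B ×ˢ B | x + (w.1 + w.2) ∈ B} : ℝ) ≤ η * #B ^ 2 := fun x =>
    (div_le_iff₀ (by positivity)).1 (hB x)
  have hcount : (#(chainEvent B y t) : ℝ) * #B ^ 2 ≤
      η * #B ^ 2 * #(chainEvent B y (Fin.tail t)) := calc
    (#(chainEvent B y t) : ℝ) * #B ^ 2 = #(chainEvent B y t ×ˢ B ×ˢ B) := by
      push_cast [card_product]; ring
    _ = ∑ Z ∈ chainEvent B y (Fin.tail t),
          (#{z ∈ chainEvent B y t ×ˢ B ×ˢ B | update (update z.1 a z.2.1) b z.2.2 = Z} : ℝ) := by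
      exact_mod_cast card_eq_sum_card_fiberwise (mapsTo_update_update_chainEvent hab hlater y)
    _ ≤ ∑ _Z ∈ chainEvent B y (Fin.tail t), η * #B ^ 2 :=
      sum_le_sum fun Z _ => (Nat.cast_le.2 (card_fiber_update_update_le hab ha hb y Z)).trans
        (hpair _)
    _ = η * #B ^ 2 * #(chainEvent B y (Fin.tail t)) := by rw [sum_const, nsmul_eq_mul]; ring
  have hB2 : (0 : ℝ) < #B ^ 2 := by positivity
  nlinarith

theorem card_chainEvent_le (hη : 0 ≤ η)
    (hB : ∀ x, (#{w ∈ B ×ˢ B | x + (w.1 + w.2) ∈ B} : ℝ) / #B ^ 2 ≤ η) (y : V) :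
    ∀ {r : ℕ} {t : Fin r → ι → R}, IsPairChain t →
      (#(chainEvent B y t) : ℝ) ≤ η ^ r * #B ^ Fintype.card ι
  | 0, t, _ => by
    rw [pow_zero, one_mul]
    exact_mod_cast (card_filter_le _ _).trans_eq (by simp)
  | r + 1, t, ⟨⟨a, b, hab, ha, hb, hlater⟩, htail⟩ => calc
    (#(chainEvent B y t) : ℝ) ≤ η * #(chainEvent B y (Fin.tail t)) :=
      card_chainEvent_le_mul_card_chainEvent_tail hη hB hab ha hb hlater y
    _ ≤ η * (η ^ r * #B ^ Fintype.card ι) :=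
      mul_le_mul_of_nonneg_left (card_chainEvent_le hη hB y htail) hη
    _ = η ^ (r + 1) * #B ^ Fintype.card ι := by ring

theorem filter_subset_biUnion_chainEvent [Fintype V] {S : Finset (ι → R)} {s : ι → R}
    {r : ℕ} {t : Fin r → ι → R} (hst : ∀ k, s + t k ∈ S) :
    {X ∈ Fintype.piFinset fun _ : ι => B | ∀ v ∈ S, ∑ i, v i • X i ∈ B}
      ⊆ (univ : Finset V).biUnion fun y => chainEvent B y t := by
  intro X hX
  rw [mem_filter] at hX
  refine mem_biUnion.2 ⟨∑ i, s i • X i, mem_univ _, mem_filter.2 ⟨hX.1, fun k => ?_⟩⟩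
  simpa [add_smul, sum_add_distrib] using hX.2 _ (hst k)

theorem card_forall_mem_div_le_of_isPairChain [Fintype V] {P : V → Prop} [DecidablePred P]
    (hη : 0 ≤ η)
    (hP : ∀ x : V, (Nat.card {w : V × V // P w.1 ∧ P w.2 ∧ P (x + (w.1 + w.2))} : ℝ) /
      (Nat.card {w // P w} : ℝ) ^ 2 ≤ η)
    {S : Finset (ι → R)} {s : ι → R} {r : ℕ} {t : Fin r → ι → R} (hst : ∀ k, s + t k ∈ S)
    (ht : IsPairChain t) :
    (Nat.card {X : ι → V // (∀ i, P (X i)) ∧ ∀ v ∈ S, P (∑ i, v i • X i)} : ℝ) /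
      (Nat.card {w // P w} : ℝ) ^ Fintype.card ι ≤ Fintype.card V * η ^ r := by
  set B : Finset V := {w | P w}
  have hcardB : Nat.card {w // P w} = #B := by
    rw [Nat.card_eq_fintype_card, Fintype.card_subtype]
  have hB : ∀ x, (#{w ∈ B ×ˢ B | x + (w.1 + w.2) ∈ B} : ℝ) / #B ^ 2 ≤ η := by
    intro x
    convert hP x using 3
    · rw [Nat.card_eq_fintype_card, Fintype.card_subtype]
      congr 1; ext w; simp [B, and_assoc]
    · exact_mod_cast hcardB.symm
  have hevent : Nat.card {X : ι → V // (∀ i, P (X i)) ∧ ∀ v ∈ S, P (∑ i, v i • X i)} =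
      #{X ∈ Fintype.piFinset fun _ => B | ∀ v ∈ S, ∑ i, v i • X i ∈ B} := by
    rw [Nat.card_eq_fintype_card, Fintype.card_subtype]
    congr 1; ext X; simp [B]
  rw [hevent, hcardB]
  refine div_le_of_le_mul₀ (by positivity) (by positivity) ?_
  calc (#{X ∈ Fintype.piFinset fun _ => B | ∀ v ∈ S, ∑ i, v i • X i ∈ B} : ℝ)
      ≤ #(univ.biUnion fun y => chainEvent B y t) := by
        exact_mod_cast card_le_card (filter_subset_biUnion_chainEvent (B := B) hst)
    _ ≤ ∑ y : V, (#(chainEvent B y t) : ℝ) := by exact_mod_cast card_biUnion_le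
    _ ≤ ∑ _y : V, η ^ r * (#B : ℝ) ^ Fintype.card ι :=
        sum_le_sum fun y _ => card_chainEvent_le hη hB y ht
    _ = Fintype.card V * η ^ r * #B ^ Fintype.card ι := by
        rw [sum_const, card_univ, nsmul_eq_mul]; ring

end Peeling

section Extraction

variable {ι : Type*} [Fintype ι] [DecidableEq ι]

theorem zmod_two_eq_of_eq_one_iff : ∀ {x y : ZMod 2}, (x = 1 ↔ y = 1) → x = y := by decide

theorem exists_shattered_pair_of_card_lt (G : Finset (ι → ZMod 2))
    (hG : Fintype.card ι + 1 < #G) :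
    ∃ i j, i ≠ j ∧ ∀ x y : ZMod 2, ∃ v ∈ G, v i = x ∧ v j = y := by
  set supp : (ι → ZMod 2) → Finset ι := fun v => {i | v i = 1}
  have hsupp : ∀ v i, i ∈ supp v ↔ v i = 1 := fun v i => by simp [supp]
  have hinj : Set.InjOn supp G := fun v _ w _ h =>
    funext fun i => zmod_two_eq_of_eq_one_iff <| by rw [← hsupp, ← hsupp, h]
  have hvcDim : 2 ≤ (G.image supp).vcDim := by
    by_contra! h
    have hsauer :=
      (card_le_card_shatterer _).trans (card_shatterer_le_sum_vcDim (𝒜 := G.image supp))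
    have hmono := sum_le_sum_of_subset (f := (Fintype.card ι).choose)
      (Iic_subset_Iic.2 (Nat.le_of_lt_succ h))
    rw [card_image_of_injOn hinj] at hsauer
    rw [← Nat.range_succ_eq_Iic 1] at hmono
    simp only [sum_range_succ, range_zero, sum_empty, Nat.choose_zero_right,
      Nat.choose_one_right] at hmono
    omega
  obtain ⟨s, hs, hcard⟩ := (Finset.le_sup_iff (by norm_num)).1 hvcDim
  obtain ⟨i, hi, j, hj, hij⟩ := one_lt_card.1 hcard
  refine ⟨i, j, hij, fun x y => ?_⟩
  obtain ⟨u, hu, hsu⟩ :=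
    (mem_shatterer.1 hs) (filter_subset (fun k => k = i ∧ x = 1 ∨ k = j ∧ y = 1) s)
  obtain ⟨v, hv, rfl⟩ := mem_image.1 hu
  have hmem : ∀ k ∈ s, v k = 1 ↔ (k = i ∧ x = 1 ∨ k = j ∧ y = 1) := fun k hk => by
    simpa [hk, hsupp] using congrArg (k ∈ ·) hsu
  refine ⟨v, hv, zmod_two_eq_of_eq_one_iff ?_, zmod_two_eq_of_eq_one_iff ?_⟩
  · simpa [hij] using hmem i hi
  · simpa [hij.symm] using hmem j hj

theorem exists_isPairChain_of_lt_card (S : Finset (ι → ZMod 2)) {r : ℕ}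
    (hS : (Fintype.card ι + 1) * 4 ^ r < #S) :
    ∃ s ∈ S, ∃ t : Fin r → ι → ZMod 2, (∀ k, s + t k ∈ S) ∧ IsPairChain t := by
  induction r generalizing S with
  | zero =>
    obtain ⟨s, hs⟩ := card_pos.1 (Nat.zero_lt_of_lt hS)
    exact ⟨s, hs, finZeroElim, finZeroElim, trivial⟩
  | succ r ih =>
    obtain ⟨i, j, hij, hshatter⟩ := exists_shattered_pair_of_card_lt S <| by
      have := Nat.one_le_pow r 4 (by norm_num)
      rw [pow_succ] at hS
      nlinarith
    obtain ⟨c, -, hc⟩ := exists_lt_card_fiber_of_mul_lt_card_of_maps_to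
      (f := fun v : ι → ZMod 2 => (v i, v j)) (t := univ) (n := (Fintype.card ι + 1) * 4 ^ r)
      (fun _ _ => mem_univ _) (by simpa [pow_succ, mul_comm, mul_left_comm] using hS)
    obtain ⟨s, hs, t, hst, ht⟩ := ih _ hc
    have hclass : ∀ v ∈ {v ∈ S | (v i, v j) = c}, v i = s i ∧ v j = s j := by
      simp only [mem_filter] at hs ⊢
      rintro v ⟨-, rfl⟩
      simpa [Prod.ext_iff, eq_comm] using hs.2
    obtain ⟨w, hw, hwi, hwj⟩ := hshatter (s i + 1) (s j + 1)
    refine ⟨s, (mem_filter.1 hs).1, Fin.cons (w - s) t, Fin.cases (by simpa using hw)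
      fun k => (mem_filter.1 (hst k)).1, ⟨i, j, hij, ?_, ?_, fun k => ?_⟩, ht⟩
    · simp [hwi]
    · simp [hwj]
    · simpa using hclass _ (hst k)

end Extraction

theorem two_mul_mul_four_pow_le_of_le_logb {ℓ L d : ℕ} (hℓ : 0 < ℓ) (hL : 0 < L)
    (hd : (d : ℝ) ≤ 1 / 2 * Real.logb 2 (L / 2) - 1 / 2 * Real.logb 2 ℓ) :
    2 * ℓ * 4 ^ d ≤ L := by
  have hlog : ((2 * d : ℕ) : ℝ) ≤ Real.logb 2 (L / (2 * ℓ)) := by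
    rw [div_mul_eq_div_div, Real.logb_div (by positivity) (by positivity)]
    push_cast
    linarith
  rw [Real.le_logb_iff_rpow_le one_lt_two (by positivity), Real.rpow_natCast, pow_mul,
    le_div_iff₀ (by positivity)] at hlog
  norm_num at hlog
  exact_mod_cast (by linarith : 2 * (ℓ : ℝ) * 4 ^ d ≤ L)

theorem chain_event_bound_general (p : ℝ) (δp : ℝ) (n₀ : ℕ)
    (hpair : ∀ n : ℕ, n₀ ≤ n → ∀ x : Fin n → ZMod 2,
      ((Nat.card {w : (Fin n → ZMod 2) × (Fin n → ZMod 2) //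
            (hammingNorm w.1 : ℝ) ≤ p * n ∧ (hammingNorm w.2 : ℝ) ≤ p * n ∧
            (hammingDist x (w.1 + w.2) : ℝ) ≤ p * n} : ℝ) /
          (Nat.card {w : Fin n → ZMod 2 // (hammingNorm w : ℝ) ≤ p * n} : ℝ) ^ 2)
        ≤ (2 : ℝ) ^ (-(δp * n))) :
    ∀ n : ℕ, n₀ ≤ n → ∀ ℓ L : ℕ, 0 < ℓ → 0 < L → L + 1 ≤ 2 ^ ℓ →
      ∀ d : ℤ, d = ⌊(1 / 2 : ℝ) * Real.logb 2 ((L : ℝ) / 2) -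
          (1 / 2 : ℝ) * Real.logb 2 (ℓ : ℝ)⌋ → 1 ≤ d →
      ∀ S : Finset (Fin ℓ → ZMod 2), S.card = L + 1 →
        ((Nat.card {X : Fin ℓ → (Fin n → ZMod 2) //
              (∀ i, (hammingNorm (X i) : ℝ) ≤ p * n) ∧
              ∀ v ∈ S, (hammingNorm (∑ i, v i • X i) : ℝ) ≤ p * n} : ℝ) /
            (Nat.card {w : Fin n → ZMod 2 // (hammingNorm w : ℝ) ≤ p * n} : ℝ) ^ ℓ)
          ≤ (2 : ℝ) ^ (n : ℕ) * (2 : ℝ) ^ (-(δp * (d : ℝ) * n)) := by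
  intro n hn ℓ L hℓ hL _ d hd hd1 S hS
  lift d to ℕ using by omega
  have hLd : 2 * ℓ * 4 ^ d ≤ L :=
    two_mul_mul_four_pow_le_of_le_logb hℓ hL (by exact_mod_cast hd ▸ Int.floor_le _)
  obtain ⟨s, -, t, hst, ht⟩ :=
    exists_isPairChain_of_lt_card (r := d) S (by rw [hS, Fintype.card_fin]; nlinarith)
  have hpair_n := hpair n hn
  simp_rw [hammingDist_eq_hammingNorm, ZModModule.neg_eq_self] at hpair_n
  have hbound := card_forall_mem_div_le_of_isPairChain (R := ZMod 2) (V := Fin n → ZMod 2)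
    (P := fun w => (hammingNorm w : ℝ) ≤ p * n) (by positivity) hpair_n hst ht
  rw [Fintype.card_fin] at hbound
  refine hbound.trans_eq ?_
  rw [Fintype.card_fun, ZMod.card, Fintype.card_fin, ← Real.rpow_natCast _ d,
    ← Real.rpow_mul (by norm_num)]
  push_cast
  ring_nf

/-- Claim 4.2: assume that for all `n ≥ n₀` and every `x ∈ 𝔽₂ⁿ`, two independent uniform
samples `w₁, w₂` from `B_n(0,p)` satisfy `Pr[w₁ + w₂ ∈ B_n(x,p)] ≤ 2^(-δ_p n)`.  Then
for all `n ≥ n₀`, positive integers `ℓ, L` with `L + 1 ≤ 2^ℓ` and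
`d := ⌊(1/2) log₂ (L/2) - (1/2) log₂ ℓ⌋ ≥ 1`, and every `S ⊆ 𝔽₂^ℓ` with `|S| = L + 1`:
if `X₁, …, X_ℓ` are picked independently and uniformly from `B_n(0,p)` and
`X_v = ∑ i, v i • X i`, then `Pr[∀ v ∈ S, X_v ∈ B_n(0,p)] ≤ 2^n · 2^(-δ_p d n)`.
All probabilities are expressed as counting ratios. -/
theorem chain_event_bound (p : ℝ) (hp0 : 0 < p) (hp1 : p < 1 / 2)
    (δp : ℝ) (hδp : 0 < δp) (n₀ : ℕ)
    (hpair : ∀ n : ℕ, n₀ ≤ n → ∀ x : Fin n → ZMod 2,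
      ((Nat.card {w : (Fin n → ZMod 2) × (Fin n → ZMod 2) //
            (hammingNorm w.1 : ℝ) ≤ p * n ∧ (hammingNorm w.2 : ℝ) ≤ p * n ∧
            (hammingDist x (w.1 + w.2) : ℝ) ≤ p * n} : ℝ) /
          (Nat.card {w : Fin n → ZMod 2 // (hammingNorm w : ℝ) ≤ p * n} : ℝ) ^ 2)
        ≤ (2 : ℝ) ^ (-(δp * n))) :
    ∀ n : ℕ, n₀ ≤ n → ∀ ℓ L : ℕ, 0 < ℓ → 0 < L → L + 1 ≤ 2 ^ ℓ →
      ∀ d : ℤ, d = ⌊(1 / 2 : ℝ) * Real.logb 2 ((L : ℝ) / 2) -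
          (1 / 2 : ℝ) * Real.logb 2 (ℓ : ℝ)⌋ → 1 ≤ d →
      ∀ S : Finset (Fin ℓ → ZMod 2), S.card = L + 1 →
        ((Nat.card {X : Fin ℓ → (Fin n → ZMod 2) //
              (∀ i, (hammingNorm (X i) : ℝ) ≤ p * n) ∧
              ∀ v ∈ S, (hammingNorm (∑ i, v i • X i) : ℝ) ≤ p * n} : ℝ) /
            (Nat.card {w : Fin n → ZMod 2 // (hammingNorm w : ℝ) ≤ p * n} : ℝ) ^ ℓ)
          ≤ (2 : ℝ) ^ (n : ℕ) * (2 : ℝ) ^ (-(δp * (d : ℝ) * n)) :=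
  chain_event_bound_general p δp n₀ hpair
end
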